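/- Let x₀ be a unit dual quaternion (star x₀ * x₀ = 1) and v a skew-adjoint dual quaternion (star v = -v), and suppose the two key poses lie on the one-parameter screw motion through x₀ along v, i.e. x₁ = x₀ * exp(a • v) and x₂ = x₀ * exp(b • v) for some a, b ∈ ℝ. Then (i) star x₁ * x₂ = exp((b - a) • v), and (ii) every ScLERP interpolant between x₁ and x₂ stays on the same one-parameter screw motion: for all τ ∈ ℝ, x₁ * exp((τ * (b - a)) • v) = x₀ * exp((a + τ * (b - a)) • v). Hence if both boundary poses satisfy a geometric constraint given by membership in the coset {x₀ * exp(s • v) : s ∈ ℝ}, so does the entire interpolated motion. -/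

import Mathlib

/-!
The exponentials `exp (s • v)` of real multiples of one element commute, so `s ↦ exp (s • v)` is a
one-parameter group, and for skew-adjoint `v` the star of `exp (s • v)` is `exp (-s • v)`. Hence
`star x₀ * x₀ = 1` cancels in the relative pose of `x₀ * exp (a • v)` and `x₀ * exp (b • v)`,
which is `exp ((b - a) • v)`, and right-multiplying a point of the screw motion
`s ↦ x₀ * exp (s • v)` by `exp (t • v)` only shifts its parameter by `t`.
-/
open Quaternion

/-- Componentwise star (quaternion conjugation on primary and dual parts)
on the dual quaternions `DualNumber ℍ[ℝ]`. -/
noncomputable instance : Star (DualNumber ℍ[ℝ]) :=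
  ⟨fun x => TrivSqZeroExt.inl (star x.fst) + TrivSqZeroExt.inr (star x.snd)⟩

@[simp] theorem DualQuaternion.fst_star (x : DualNumber ℍ[ℝ]) :
    (star x).fst = star x.fst := by
  show (TrivSqZeroExt.inl (star x.fst) + TrivSqZeroExt.inr (star x.snd)).fst = _
  simp

@[simp] theorem DualQuaternion.snd_star (x : DualNumber ℍ[ℝ]) :
    (star x).snd = star x.snd := by
  show (TrivSqZeroExt.inl (star x.fst) + TrivSqZeroExt.inr (star x.snd)).snd = _
  simp

noncomputable instance : StarRing (DualNumber ℍ[ℝ]) where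
  star_involutive x := TrivSqZeroExt.ext (by simp) (by simp)
  star_mul x y := TrivSqZeroExt.ext (by simp [TrivSqZeroExt.fst_mul])
    (by
      simp [TrivSqZeroExt.snd_mul, MulOpposite.smul_eq_mul_unop, smul_eq_mul]
      abel)
  star_add x y := TrivSqZeroExt.ext (by simp) (by simp)

instance : ContinuousStar (DualNumber ℍ[ℝ]) :=
  ⟨(TrivSqZeroExt.continuous_inl.comp TrivSqZeroExt.continuous_fst.star).add
    (TrivSqZeroExt.continuous_inr.comp TrivSqZeroExt.continuous_snd.star)⟩

instance : StarModule ℝ (DualNumber ℍ[ℝ]) :=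
  ⟨fun r x => TrivSqZeroExt.ext (by simp) (by simp)⟩

namespace NormedSpace

variable {𝔸 : Type*} [NormedRing 𝔸] [NormedAlgebra ℝ 𝔸]

theorem exp_add_smul [CompleteSpace 𝔸] (v : 𝔸) (s t : ℝ) :
    exp ((s + t) • v) = exp (s • v) * exp (t • v) :=
  letI := NormedAlgebra.restrictScalars ℚ ℝ 𝔸
  add_smul s t v ▸ exp_add_of_commute (((Commute.refl v).smul_left s).smul_right t)

theorem mul_exp_smul_mul_exp_smul [CompleteSpace 𝔸] (x v : 𝔸) (s t : ℝ) :
    x * exp (s • v) * exp (t • v) = x * exp ((s + t) • v) := by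
  rw [mul_assoc, exp_add_smul]

variable [StarRing 𝔸] [StarModule ℝ 𝔸] [ContinuousStar 𝔸]

theorem star_exp_smul_of_star_eq_neg {v : 𝔸} (hv : star v = -v) (s : ℝ) :
    star (exp (s • v)) = exp ((-s) • v) := by
  rw [star_exp, StarModule.star_smul, hv, star_trivial, smul_neg, neg_smul]

theorem star_mul_exp_smul_mul_mul_exp_smul [CompleteSpace 𝔸] {x v : 𝔸} (hx : star x * x = 1)
    (hv : star v = -v) (a b : ℝ) :
    star (x * exp (a • v)) * (x * exp (b • v)) = exp ((b - a) • v) := by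
  rw [star_mul, star_exp_smul_of_star_eq_neg hv, mul_assoc, ← mul_assoc (star x), hx, one_mul,
    ← exp_add_smul, neg_add_eq_sub]

end NormedSpace

/-- **ScLERP preserves one-parameter screw-motion constraints.**  If the key poses
`x₁ = x₀ * exp (a • v)` and `x₂ = x₀ * exp (b • v)` lie on the one-parameter
screw motion through the unit dual quaternion `x₀` along the skew-adjoint twist
`v`, then `star x₁ * x₂ = exp ((b - a) • v)`, every ScLERP interpolant stays on
the same screw motion, and hence every interpolant belongs to the coset
`{x₀ * exp (s • v) : s ∈ ℝ}`. -/
theorem sclerp_preserves_screw_motion_constraint (x₀ v : DualNumber ℍ[ℝ]) (a b : ℝ)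
    (hx₀ : star x₀ * x₀ = 1) (hv : star v = -v)
    (x₁ x₂ : DualNumber ℍ[ℝ])
    (hx₁ : x₁ = x₀ * NormedSpace.exp (a • v))
    (hx₂ : x₂ = x₀ * NormedSpace.exp (b • v)) :
    star x₁ * x₂ = NormedSpace.exp ((b - a) • v) ∧
    (∀ τ : ℝ, x₁ * NormedSpace.exp ((τ * (b - a)) • v) =
      x₀ * NormedSpace.exp ((a + τ * (b - a)) • v)) ∧
    (∀ τ : ℝ, x₁ * NormedSpace.exp ((τ * (b - a)) • v) ∈
      {y : DualNumber ℍ[ℝ] | ∃ s : ℝ, y = x₀ * NormedSpace.exp (s • v)}) := by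
  subst hx₁ hx₂
  have on_screw (τ : ℝ) : x₀ * NormedSpace.exp (a • v) * NormedSpace.exp ((τ * (b - a)) • v) =
      x₀ * NormedSpace.exp ((a + τ * (b - a)) • v) :=
    NormedSpace.mul_exp_smul_mul_exp_smul x₀ v a (τ * (b - a))
  exact ⟨NormedSpace.star_mul_exp_smul_mul_mul_exp_smul hx₀ hv a b, on_screw,
    fun τ => ⟨_, on_screw τ⟩⟩
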